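/- Every nonempty commutative subrun from s to t can be linearized: there is an ordering d₁, d₂, …, d_m of the transitions of R (with multiplicity) such that, setting s₀ = s and s_{i} = s_{i-1} − [source(d_i)] + target(d_i), one has source(d_i) ∈ supp(s_{i-1}) for all i, and s_m = t. -/

import Mathlib

structure CTrans (S Q : Type) where
  src : Q
  out : S → ℤ
  tgt : Q → ℕ

instance {S Q : Type} [Fintype S] [Fintype Q] [DecidableEq S] [DecidableEq Q] :
    DecidableEq (CTrans S Q) := fun a b =>
  decidable_of_iff (a.src = b.src ∧ a.out = b.out ∧ a.tgt = b.tgt) (by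
    cases a; cases b; simp)

structure CGrammar (S Q : Type) [Fintype S] [Fintype Q] [DecidableEq S] [DecidableEq Q] where
  q0 : Q
  delta : Finset (CTrans S Q)

namespace CGrammar

variable {S Q : Type} [Fintype S] [Fintype Q] [DecidableEq S] [DecidableEq Q]

def srcCount (g : CGrammar S Q) (R : CTrans S Q → ℕ) (q : Q) : ℕ :=
  ∑ d ∈ g.delta, if d.src = q then R d else 0

def tgtCount (g : CGrammar S Q) (R : CTrans S Q → ℕ) (q : Q) : ℕ :=
  ∑ d ∈ g.delta, R d * d.tgt q

def parikh (g : CGrammar S Q) (R : CTrans S Q → ℕ) (a : S) : ℤ :=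
  ∑ d ∈ g.delta, (R d : ℤ) * d.out a

def Step (g : CGrammar S Q) (R : CTrans S Q → ℕ) (p q : Q) : Prop :=
  ∃ d ∈ g.delta, 0 < R d ∧ d.src = p ∧ 0 < d.tgt q

def ind (p : Q) : Q → ℕ := fun q => if q = p then 1 else 0

/-- `R` is a commutative subrun from `s` to `t`: support in `delta`,
Euler condition, and connectivity from `s`. -/
def IsSubrun (g : CGrammar S Q) (R : CTrans S Q → ℕ) (s t : Q → ℕ) : Prop :=
  (∀ d, 0 < R d → d ∈ g.delta) ∧
  (∀ q, (g.srcCount R q : ℤ) - (s q : ℤ) = (g.tgtCount R q : ℤ) - (t q : ℤ)) ∧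
  (∀ q, 0 < g.srcCount R q → ∃ p, 0 < s p ∧ Relation.ReflTransGen (g.Step R) p q)

def IsRun (g : CGrammar S Q) (R : CTrans S Q → ℕ) (p : Q) : Prop :=
  g.IsSubrun R (ind p) 0

def IsCycle (g : CGrammar S Q) (R : CTrans S Q → ℕ) (p : Q) : Prop :=
  g.IsSubrun R (ind p) (ind p)

def size (g : CGrammar S Q) (R : CTrans S Q → ℕ) : ℕ := ∑ d ∈ g.delta, R d

def NormalForm (g : CGrammar S Q) : Prop :=
  ∀ d ∈ g.delta, (∑ q, d.tgt q) ≤ 2 ∧ (∑ a, |d.out a|) ≤ 1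

def Regular (g : CGrammar S Q) : Prop :=
  ∀ d ∈ g.delta, (∑ q, d.tgt q) ≤ 1 ∧ (∑ a, |d.out a|) ≤ 1

def Positive (g : CGrammar S Q) : Prop :=
  ∀ d ∈ g.delta, ∀ a, 0 ≤ d.out a

/-- A simple cycle: a cycle (from some nonterminal) that is not the sum of
two nonzero cycles. -/
def SimpleCycle (g : CGrammar S Q) (C : CTrans S Q → ℕ) : Prop :=
  (∃ p, g.IsCycle C p) ∧
  ¬ ∃ C₁ C₂ p₁ p₂, g.IsCycle C₁ p₁ ∧ g.IsCycle C₂ p₂ ∧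
      (∃ d, 0 < C₁ d) ∧ (∃ d, 0 < C₂ d) ∧ (∀ d, C d = C₁ d + C₂ d)

/-- The Parikh image of the grammar. -/
def PsiSet (g : CGrammar S Q) : Set (S → ℤ) :=
  {v | ∃ R, g.IsRun R g.q0 ∧ g.parikh R = v}

end CGrammar

open CGrammar

/-! A nonempty subrun always has a transition that can fire first. Take a nonterminal `p`
available in `s` from which `R` fires. If some transition `d` leaving `p` keeps `p` reachable
from the state reached by firing `d`, fire it: every path of `R` that used `d` can be restarted
at a target of `d`, so connectivity survives. Otherwise no transition of `R` enters `p` and `s`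
holds `p` once, so by the Euler condition `R` fires exactly once from `p`, and after firing it
nothing remains to be reached from `p`. Induction on the size of `R` finishes the proof. -/

lemma Pi.exists_eq_add_single {α : Type*} [DecidableEq α] {f : α → ℕ} {a : α} (h : 0 < f a) :
    ∃ f' : α → ℕ, f = f' + Pi.single a 1 :=
  ⟨Function.update f a (f a - 1), funext fun b => by
    by_cases hb : b = a
    · subst hb; simp; omega
    · simp [hb]⟩

namespace CGrammar

section Fire

variable {S Q : Type} [DecidableEq Q]

def fire (s : Q → ℕ) (d : CTrans S Q) : Q → ℕ := s - ind d.src + d.tgt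

lemma tgt_le_fire (s : Q → ℕ) (d : CTrans S Q) (q : Q) : d.tgt q ≤ fire s d q := by
  simp only [fire, Pi.add_apply]
  omega

lemma le_fire_of_ne (s : Q → ℕ) {d : CTrans S Q} {q : Q} (h : q ≠ d.src) :
    s q ≤ fire s d q := by
  simp [fire, ind, h]

lemma le_fire_add_one (s : Q → ℕ) (d : CTrans S Q) (q : Q) : s q ≤ fire s d q + 1 := by
  simp only [fire, ind, Pi.add_apply, Pi.sub_apply]
  split_ifs <;> omega

end Fire

variable {S Q : Type} [Fintype S] [Fintype Q] [DecidableEq S] [DecidableEq Q]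
  {g : CGrammar S Q} {R : CTrans S Q → ℕ} {s t : Q → ℕ} {d : CTrans S Q} {p q : Q}

lemma srcCount_pos_iff : 0 < g.srcCount R q ↔ ∃ d ∈ g.delta, d.src = q ∧ 0 < R d := by
  simp only [srcCount, Finset.sum_pos_iff]
  refine exists_congr fun d => and_congr_right fun _ => ?_
  split_ifs with h <;> simp [h]

lemma tgtCount_pos_iff : 0 < g.tgtCount R q ↔ ∃ d ∈ g.delta, 0 < R d ∧ 0 < d.tgt q := by
  simp only [tgtCount, Finset.sum_pos_iff, CanonicallyOrderedAdd.mul_pos]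

lemma srcCount_add_single (hd : d ∈ g.delta) (q : Q) :
    g.srcCount (R + Pi.single d 1) q = g.srcCount R q + ind d.src q := by
  simp only [srcCount, Pi.add_apply, ite_add_zero, Finset.sum_add_distrib, add_right_inj]
  rw [Finset.sum_eq_single_of_mem d hd fun e _ he => by simp [he]]
  simp [ind, eq_comm]

lemma tgtCount_add_single (hd : d ∈ g.delta) (q : Q) :
    g.tgtCount (R + Pi.single d 1) q = g.tgtCount R q + d.tgt q := by
  simp only [tgtCount, Pi.add_apply, add_mul, Finset.sum_add_distrib, add_right_inj]
  rw [Finset.sum_eq_single_of_mem d hd fun e _ he => by simp [he]]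
  simp

lemma size_add_single (hd : d ∈ g.delta) : g.size (R + Pi.single d 1) = g.size R + 1 := by
  simp [size, Finset.sum_add_distrib, Finset.sum_pi_single', hd]

lemma size_pos_iff (hR : ∀ d, 0 < R d → d ∈ g.delta) : 0 < g.size R ↔ ∃ d, 0 < R d := by
  simp only [size, Finset.sum_pos_iff]
  exact ⟨fun ⟨d, _, hd⟩ => ⟨d, hd⟩, fun ⟨d, hd⟩ => ⟨d, hR d hd, hd⟩⟩

lemma step_of_step_add_single (h : g.Step (R + Pi.single d 1) p q) :
    g.Step R p q ∨ d.src = p ∧ 0 < d.tgt q := by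
  obtain ⟨e, he, hRe, rfl, hq⟩ := h
  by_cases hed : e = d
  · exact .inr ⟨hed ▸ rfl, hed ▸ hq⟩
  · exact .inl ⟨e, he, by simpa [hed] using hRe, rfl, hq⟩

/-- Cut a path at its first and at its last use of `d`. -/
lemma reflTransGen_of_reflTransGen_add_single
    (h : Relation.ReflTransGen (g.Step (R + Pi.single d 1)) p q) :
    Relation.ReflTransGen (g.Step R) p q ∨
      Relation.ReflTransGen (g.Step R) p d.src ∧
        ∃ y, 0 < d.tgt y ∧ Relation.ReflTransGen (g.Step R) y q := by
  induction h using Relation.ReflTransGen.head_induction_on with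
  | refl => exact .inl .refl
  | @head a c hac _ ih =>
    rcases step_of_step_add_single hac with hac | ⟨rfl, hc⟩
    · exact ih.imp (.head hac) fun ⟨hcd, hy⟩ => ⟨.head hac hcd, hy⟩
    · refine .inr ⟨.refl, ?_⟩
      rcases ih with hcq | ⟨_, hy⟩
      exacts [⟨c, hc, hcq⟩, hy]

lemma srcCount_pos_of_reflTransGen (h : Relation.ReflTransGen (g.Step R) p q)
    (hq : 0 < g.srcCount R q) : 0 < g.srcCount R p := by
  rcases h.cases_head with rfl | ⟨_, ⟨e, he, hRe, rfl, _⟩, _⟩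
  exacts [hq, srcCount_pos_iff.2 ⟨e, he, rfl, hRe⟩]

def Linearizable (R : CTrans S Q → ℕ) (s t : Q → ℕ) : Prop :=
  ∃ (m : ℕ) (seq : Fin m → CTrans S Q) (st : ℕ → Q → ℕ),
    st 0 = s ∧ st m = t ∧
    (∀ d, R d = (Finset.univ.filter fun i : Fin m => seq i = d).card) ∧
    ∀ i : Fin m, 0 < st i (seq i).src ∧ st (i + 1) = fire (st i) (seq i)

lemma linearizable_zero (s : Q → ℕ) : Linearizable (0 : CTrans S Q → ℕ) s s :=
  ⟨0, Fin.elim0, fun _ => s, rfl, rfl, fun _ => by simp, fun i => i.elim0⟩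

lemma Linearizable.add_single (h : Linearizable R (fire s d) t) (hs : 0 < s d.src) :
    Linearizable (R + Pi.single d 1) s t := by
  obtain ⟨m, seq, st, h0, hm, hcount, hstep⟩ := h
  refine ⟨m + 1, Fin.cons d seq, fun | 0 => s | k + 1 => st k, rfl, hm, fun e => ?_, ?_⟩
  · rw [Fin.card_filter_univ_succ', Pi.add_apply, hcount e, add_comm]
    simp [Pi.single_apply, eq_comm]
  · refine Fin.cases ⟨hs, by simpa using h0⟩ fun i => ?_
    simpa using hstep i

namespace IsSubrun

lemma eq_of_zero (hR : g.IsSubrun 0 s t) : s = t := by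
  funext q
  have := hR.2.1 q
  simp [srcCount, tgtCount] at this
  omega

lemma exists_transGen_of_tgtCount_pos (hR : g.IsSubrun R s t) (hq : 0 < g.tgtCount R q) :
    ∃ p, 0 < s p ∧ Relation.TransGen (g.Step R) p q := by
  obtain ⟨e, he, hRe, heq⟩ := tgtCount_pos_iff.1 hq
  obtain ⟨p, hp, hpe⟩ := hR.2.2 e.src (srcCount_pos_iff.2 ⟨e, he, rfl, hRe⟩)
  exact ⟨p, hp, Relation.TransGen.tail' hpe ⟨e, he, hRe, rfl, heq⟩⟩

lemma exists_srcCount_pos (hR : g.IsSubrun R s t) (hne : ∃ d, 0 < R d) :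
    ∃ p, 0 < s p ∧ 0 < g.srcCount R p := by
  obtain ⟨d, hd⟩ := hne
  have hsrc : 0 < g.srcCount R d.src := srcCount_pos_iff.2 ⟨d, hR.1 d hd, rfl, hd⟩
  obtain ⟨p, hp, hpd⟩ := hR.2.2 _ hsrc
  exact ⟨p, hp, srcCount_pos_of_reflTransGen hpd hsrc⟩

lemma of_add_single (hR : g.IsSubrun (R + Pi.single d 1) s t) (hs : 0 < s d.src)
    (hreach : (∃ y, 0 < fire s d y ∧
        Relation.ReflTransGen (g.Step (R + Pi.single d 1)) y d.src) ∨
      g.srcCount R d.src = 0) :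
    g.IsSubrun R (fire s d) t := by
  obtain ⟨hsupp, heuler, hconn⟩ := hR
  have hd : d ∈ g.delta := hsupp d (by simp)
  refine ⟨fun e he => hsupp e (by simp; omega), fun q => ?_, fun q hq => ?_⟩
  · have hind : ind d.src q ≤ s q := by
      unfold ind
      split_ifs with h
      exacts [h ▸ hs, Nat.zero_le _]
    have := heuler q
    rw [srcCount_add_single hd, tgtCount_add_single hd] at this
    simp only [fire, Pi.add_apply, Pi.sub_apply]
    omega
  obtain ⟨x, hx, hxq⟩ := hconn q (by rw [srcCount_add_single hd]; omega)
  rcases reflTransGen_of_reflTransGen_add_single hxq with hxq | ⟨_, y, hy, hyq⟩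
  · rcases eq_or_ne x d.src with rfl | hxd
    · rcases hreach with ⟨y, hy, hyd⟩ | hzero
      · rcases reflTransGen_of_reflTransGen_add_single hyd with hyd | ⟨_, z, hz, hzd⟩
        · exact ⟨y, hy, hyd.trans hxq⟩
        · exact ⟨z, (tgt_le_fire s d z).trans_lt' hz, hzd.trans hxq⟩
      · exact absurd (srcCount_pos_of_reflTransGen hxq hq) (by omega)
    · exact ⟨x, (le_fire_of_ne s hxd).trans_lt' hx, hxq⟩
  · exact ⟨y, (tgt_le_fire s d y).trans_lt' hy, hyq⟩

lemma exists_fire (hR : g.IsSubrun R s t) (hne : ∃ d, 0 < R d) :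
    ∃ d R', R = R' + Pi.single d 1 ∧ 0 < s d.src ∧ g.IsSubrun R' (fire s d) t := by
  obtain ⟨p, hp, hpR⟩ := hR.exists_srcCount_pos hne
  obtain ⟨d₀, hd₀, rfl, hRd₀⟩ := srcCount_pos_iff.1 hpR
  by_cases hback : ∃ d, 0 < R d ∧ d.src = d₀.src ∧
      ∃ y, 0 < fire s d y ∧ Relation.ReflTransGen (g.Step R) y d₀.src
  · obtain ⟨d, hRd, hdd₀, hy⟩ := hback
    obtain ⟨R', rfl⟩ := Pi.exists_eq_add_single hRd
    exact ⟨d, R', rfl, hdd₀ ▸ hp, hR.of_add_single (hdd₀ ▸ hp) (.inl (hdd₀ ▸ hy))⟩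
  push Not at hback
  have hsp : s d₀.src ≤ 1 := by
    by_contra! h
    exact hback d₀ hRd₀ rfl d₀.src (by have := le_fire_add_one s d₀ d₀.src; omega) .refl
  have htgt : g.tgtCount R d₀.src = 0 := by
    by_contra! h
    obtain ⟨x, hx, hxp⟩ := hR.exists_transGen_of_tgtCount_pos (Nat.pos_of_ne_zero h)
    obtain ⟨c, ⟨f, -, hRf, rfl, hc⟩, hcp⟩ := Relation.TransGen.head'_iff.1 hxp
    by_cases hf : f.src = d₀.src
    · exact hback f hRf hf c ((tgt_le_fire s f c).trans_lt' hc) hcp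
    · exact hback d₀ hRd₀ rfl f.src ((le_fire_of_ne s hf).trans_lt' hx) hxp.to_reflTransGen
  have hsrc : g.srcCount R d₀.src = 1 := by
    have := hR.2.1 d₀.src
    omega
  obtain ⟨R', rfl⟩ := Pi.exists_eq_add_single hRd₀
  refine ⟨d₀, R', rfl, hp, hR.of_add_single hp (.inr ?_)⟩
  simpa [srcCount_add_single hd₀, ind] using hsrc

lemma linearizable (hR : g.IsSubrun R s t) : Linearizable R s t := by
  induction hn : g.size R generalizing R s with
  | zero =>
    obtain rfl : R = 0 := funext fun d => by
      by_contra hd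
      exact absurd ((size_pos_iff hR.1).2 ⟨d, Nat.pos_of_ne_zero hd⟩) (by omega)
    exact hR.eq_of_zero ▸ linearizable_zero s
  | succ n ih =>
    obtain ⟨d, R', rfl, hs, hR'⟩ := hR.exists_fire ((size_pos_iff hR.1).1 (by omega))
    have hsize := size_add_single (R := R') (hR.1 d (by simp))
    exact (ih hR' (by omega)).add_single hs

end IsSubrun

end CGrammar

theorem subrun_linearization_general {S Q : Type} [Fintype S] [Fintype Q]
    [DecidableEq S] [DecidableEq Q]
    (g : CGrammar S Q) (R : CTrans S Q → ℕ) (s t : Q → ℕ)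
    (hR : g.IsSubrun R s t) :
    ∃ (m : ℕ) (seq : Fin m → CTrans S Q) (st : ℕ → Q → ℕ),
      st 0 = s ∧ st m = t ∧
      (∀ d, R d = (Finset.univ.filter fun i : Fin m => seq i = d).card) ∧
      ∀ i : Fin m,
        0 < st i (seq i).src ∧
        (∀ q, st (i + 1) q = st i q - ind (seq i).src q + (seq i).tgt q) := by
  obtain ⟨m, seq, st, h0, hm, hcount, hstep⟩ := hR.linearizable
  exact ⟨m, seq, st, h0, hm, hcount, fun i => ⟨(hstep i).1, congrFun (hstep i).2⟩⟩

/-- Every nonempty commutative subrun from `s` to `t` can be linearized: the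
transitions of `R` (with multiplicity) can be ordered `d₁, …, d_m` so that,
starting from `s₀ = s` and setting `sᵢ = sᵢ₋₁ - [src dᵢ] + tgt dᵢ`, the source of
each `dᵢ` is available in `sᵢ₋₁`, and the final state is `t`. -/
theorem subrun_linearization {S Q : Type} [Fintype S] [Fintype Q]
    [DecidableEq S] [DecidableEq Q]
    (g : CGrammar S Q) (R : CTrans S Q → ℕ) (s t : Q → ℕ)
    (hR : g.IsSubrun R s t) (hne : ∃ d, 0 < R d) :
    ∃ (m : ℕ) (seq : Fin m → CTrans S Q) (st : ℕ → Q → ℕ),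
      st 0 = s ∧ st m = t ∧
      (∀ d, R d = (Finset.univ.filter fun i : Fin m => seq i = d).card) ∧
      ∀ i : Fin m,
        0 < st i (seq i).src ∧
        (∀ q, st (i + 1) q = st i q - ind (seq i).src q + (seq i).tgt q) :=
  subrun_linearization_general g R s t hR
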